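/- arXiv:1702.06494 — 5 statements merged into one kernel-verified Lean document; each statement's English description precedes it below -/
import Mathlib

section
/- Let q be an odd prime, and let J' be an r×r even integral symmetric matrix and M' a d×d integral symmetric matrix, both invertible modulo q. Then G_{J',M'}(q) = (det(J'/2) / q)^d · (det M' / q)^r · G_1(q)^{rd}, where (·/q) denotes the Legendre symbol and G_1(q) = Σ_{x mod q} exp(2πi x²/q) is the classical quadratic Gauss sum. (Here J' even integral means J' = 2J for some integral symmetric J with integer entries, and e{A} = exp(πi Tr A), so G_{J',M'}(q) = Σ_{x mod q} exp(2πi Tr(ᵗx J x M')/q).) -/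
open Matrix

/-- The generalized Gauss sum `G_{J,M}(NN) = Σ_{x mod NN} exp(πi·Tr(ᵗx J x M)/NN)`. -/
noncomputable def GS (r d NN : ℕ) (J : Matrix (Fin r) (Fin r) ℤ)
    (M : Matrix (Fin d) (Fin d) ℤ) : ℂ :=
  ∑ x : Matrix (Fin r) (Fin d) (Fin NN),
    Complex.exp ((Real.pi : ℂ) * Complex.I *
      (((Matrix.trace ((x.map fun a => ((a : ℕ) : ℤ))ᵀ * J *
          (x.map fun a => ((a : ℕ) : ℤ)) * M) : ℤ) : ℂ) / (NN : ℂ)))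

/-- The classical quadratic Gauss sum `G₁(q) = Σ_{x mod q} exp(2πi x²/q)`. -/
noncomputable def G1 (q : ℕ) : ℂ :=
  ∑ x : Fin q, Complex.exp (2 * (Real.pi : ℂ) * Complex.I * ((x : ℕ) : ℂ) ^ 2 / (q : ℂ))

/-!
Reduced mod `q`, the sum is `∑ y, ψ (Tr (ᵗy J y M))` over `r × d` matrices over `𝔽_q`, with
`ψ = ZMod.stdAddChar`; the factor `2` of `J' = 2J` turns `πi` into `2πi`. Stacking the columns
of `y`, `Tr (ᵗy J y M)` is the quadratic form of the Kronecker product `M ⊗ J`, of determinant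
`det M ^ r * det J ^ d`. Over a finite field of odd characteristic a nondegenerate quadratic form
is diagonal in an orthogonal basis, and `∑ x, ψ (a x²) = χ(a) ∑ x, ψ (x²)`, so its character sum
is `χ(discr) G₁ ^ dim`. A change of basis multiplies the discriminant by a nonzero square, which
the quadratic character `χ` does not see.
-/

open Finset
open scoped Kronecker

lemma AddChar.map_sum_eq_prod {ι A M : Type*} [AddCommMonoid A] [CommMonoid M]
    (ψ : AddChar A M) (s : Finset ι) (f : ι → A) : ψ (∑ i ∈ s, f i) = ∏ i ∈ s, ψ (f i) := by
  classical
  induction s using Finset.induction_on with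
  | empty => simp
  | insert i s hi ih => rw [sum_insert hi, prod_insert hi, map_add_eq_mul, ih]

lemma ringChar_ne_two_of_invertible_two (K : Type*) [Field K] [Invertible (2 : K)] :
    ringChar K ≠ 2 := fun h =>
  Invertible.ne_zero (2 : K) (by exact_mod_cast (ringChar.spec K 2).mpr (h ▸ dvd_rfl))

theorem Matrix.IsSymm.kronecker {m n R : Type*} [CommMagma R] {A : Matrix m m R}
    {B : Matrix n n R} (hA : A.IsSymm) (hB : B.IsSymm) : (A ⊗ₖ B).IsSymm := by
  rw [IsSymm, ← kroneckerMap_transpose, hA.eq, hB.eq]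

theorem Matrix.IsSymm.toMatrix'_toQuadraticForm' {n R : Type*} [Fintype n] [DecidableEq n]
    [CommRing R] [Invertible (2 : R)] {K : Matrix n n R} (hK : K.IsSymm) :
    K.toQuadraticForm'.toMatrix' = K := by
  rw [QuadraticForm.toMatrix', Matrix.toQuadraticForm', QuadraticMap.associated_left_inverse,
    LinearMap.toMatrix'_toLinearMap₂']
  intro x y
  rw [toLinearMap₂'_apply', toLinearMap₂'_apply', dotProduct_mulVec, dotProduct_comm,
    ← vecMul_transpose, hK.eq]

theorem Matrix.trace_transpose_mul_mul_mul_eq_toQuadraticForm' {m n R : Type*} [Fintype m]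
    [Fintype n] [DecidableEq m] [DecidableEq n] [CommRing R] (A : Matrix m m R)
    (B : Matrix n n R) (y : Matrix m n R) :
    trace (yᵀ * A * y * B) = (Bᵀ ⊗ₖ A).toQuadraticForm' (vec y) := by
  rw [toQuadraticForm', LinearMap.BilinMap.toQuadraticMap_apply, toLinearMap₂'_apply',
    kronecker_mulVec_vec, transpose_transpose, vec_dotProduct_vec, Matrix.mul_assoc,
    Matrix.mul_assoc, Matrix.mul_assoc]

theorem QuadraticForm.discr_eq_prod_of_iIsOrtho {ι K V : Type*} [Fintype ι] [DecidableEq ι]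
    [Field K] [Invertible (2 : K)] [AddCommGroup V] [Module K V] {Q : QuadraticForm K V}
    {v : Module.Basis ι K V} (hv : (QuadraticMap.associated (R := K) Q).IsOrthoᵢ v) :
    Q.discr v = ∏ i, Q (v i) := by
  rw [discr, ← det_diagonal]
  congr 1
  ext i j
  rw [toMatrix, LinearMap.toMatrix₂_apply]
  rcases eq_or_ne i j with rfl | hij
  · rw [diagonal_apply_eq, QuadraticMap.associated_eq_self_apply]
  · rw [diagonal_apply_ne _ hij, hv hij]

section FiniteField

variable {F R : Type*} [Field F] [Fintype F] [DecidableEq F] [CommRing R] [IsDomain R]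
  {ψ : AddChar F R}

theorem sum_addChar_sq_eq_gaussSum (hF : ringChar F ≠ 2) (hψ : ψ ≠ 1) :
    ∑ x, ψ (x ^ 2) = gaussSum ((quadraticChar F).ringHomComp (Int.castRingHom R)) ψ := by
  have hfiber (y : F) : (#{x | x ^ 2 = y} : R) = quadraticChar F y + 1 := by
    have := congrArg (Int.cast : ℤ → R) (quadraticChar_card_sqrts hF y)
    push_cast at this
    simpa [Set.toFinset_ofPred] using this
  calc ∑ x, ψ (x ^ 2)
      = ∑ y, (#{x | x ^ 2 = y} : R) * ψ y := by
        rw [← sum_fiberwise univ (· ^ 2)]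
        refine sum_congr rfl fun y _ => ?_
        rw [sum_congr rfl fun x hx => by rw [(mem_filter.1 hx).2], sum_const, nsmul_eq_mul]
    _ = gaussSum ((quadraticChar F).ringHomComp (Int.castRingHom R)) ψ + ∑ y, ψ y := by
        simp only [hfiber, add_mul, one_mul, sum_add_distrib, gaussSum,
          MulChar.ringHomComp_apply, eq_intCast]
    _ = _ := by rw [AddChar.sum_eq_zero_of_ne_one hψ, add_zero]

theorem sum_addChar_mul_sq (hF : ringChar F ≠ 2) (hψ : ψ ≠ 1) {a : F} (ha : a ≠ 0) :
    ∑ x, ψ (a * x ^ 2) = quadraticChar F a * ∑ x, ψ (x ^ 2) := by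
  have hquad := (quadraticChar_isQuadratic F).comp (Int.castRingHom R)
  calc ∑ x, ψ (a * x ^ 2)
      = gaussSum ((quadraticChar F).ringHomComp (Int.castRingHom R)) (ψ.mulShift a) :=
        sum_addChar_sq_eq_gaussSum hF (AddChar.IsPrimitive.of_ne_one hψ ha)
    _ = _ := by
        rw [← Units.val_mk0 ha, gaussSum_mulShift_eq, hquad.inv, sum_addChar_sq_eq_gaussSum hF hψ]
        rfl

theorem sum_addChar_weightedSumSquares {ι : Type*} [Fintype ι] [DecidableEq ι]
    (hF : ringChar F ≠ 2) (hψ : ψ ≠ 1) {w : ι → F} (hw : ∀ i, w i ≠ 0) :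
    ∑ y : ι → F, ψ (QuadraticMap.weightedSumSquares F w y)
      = (∏ i, (quadraticChar F (w i) : R)) * (∑ x, ψ (x ^ 2)) ^ Fintype.card ι := by
  simp only [QuadraticMap.weightedSumSquares_apply, smul_eq_mul, AddChar.map_sum_eq_prod, ← sq]
  rw [← Fintype.prod_sum fun i t => ψ (w i * t ^ 2)]
  simp only [sum_addChar_mul_sq hF hψ (hw _), prod_mul_distrib, prod_const, card_univ]

theorem QuadraticForm.sum_addChar_eq {ι V : Type*} [Fintype ι] [DecidableEq ι] [AddCommGroup V]
    [Module F V] [Fintype V] [Invertible (2 : F)] (hψ : ψ ≠ 1) (Q : QuadraticForm F V)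
    (b : Module.Basis ι F V) (hQ : Q.discr b ≠ 0) :
    ∑ x, ψ (Q x) = quadraticChar F (Q.discr b) * (∑ x, ψ (x ^ 2)) ^ Fintype.card ι := by
  have := Module.Finite.of_basis b
  obtain ⟨v₀, hv₀⟩ :=
    LinearMap.BilinForm.exists_orthogonal_basis (QuadraticForm.associated_isSymm F Q)
  let v := v₀.reindex (b.indexEquiv v₀).symm
  have hv : (QuadraticMap.associated (R := F) Q).IsOrthoᵢ v := fun i j hij => by
    simp only [Function.onFun, v, Module.Basis.reindex_apply, Equiv.symm_symm]
    exact hv₀ ((b.indexEquiv v₀).injective.ne hij)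
  have hdiscr : Q.discr b = (LinearMap.id.toMatrix b v).det ^ 2 * ∏ i, Q (v i) := by
    rw [← discr_eq_prod_of_iIsOrtho hv, sq, ← discr_comp]
    rfl
  have hw : ∀ i, Q (v i) ≠ 0 := fun i hi =>
    hQ (by rw [hdiscr, prod_eq_zero (mem_univ i) hi, mul_zero])
  have hdet : (LinearMap.id.toMatrix b v).det ≠ 0 := fun h0 =>
    hQ (by rw [hdiscr, h0]; ring)
  calc ∑ x, ψ (Q x)
      = ∑ y : ι → F, ψ (QuadraticMap.weightedSumSquares F (fun i => Q (v i)) y) := by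
        rw [← QuadraticMap.basisRepr_eq_of_iIsOrtho Q v hv]
        exact Fintype.sum_equiv v.equivFun.toEquiv _ _ fun x => by simp [QuadraticMap.basisRepr]
    _ = _ := by
        rw [sum_addChar_weightedSumSquares (ringChar_ne_two_of_invertible_two F) hψ hw, hdiscr,
          map_mul, map_pow, quadraticChar_sq_one hdet, one_mul, map_prod]
        push_cast
        rfl

theorem Matrix.sum_addChar_toQuadraticForm' {n : Type*} [Fintype n] [DecidableEq n]
    [Invertible (2 : F)] (hψ : ψ ≠ 1) {K : Matrix n n F} (hK : K.IsSymm) (hdet : K.det ≠ 0) :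
    ∑ y, ψ (K.toQuadraticForm' y) = quadraticChar F K.det * (∑ x, ψ (x ^ 2)) ^ Fintype.card n := by
  have hdiscr : K.toQuadraticForm'.discr (Pi.basisFun F n) = K.det := by
    rw [QuadraticForm.discr_eq_discr', QuadraticForm.discr', hK.toMatrix'_toQuadraticForm']
  rw [← hdiscr] at hdet ⊢
  exact K.toQuadraticForm'.sum_addChar_eq hψ _ hdet

theorem Matrix.sum_addChar_trace_transpose_mul_mul_mul {m n : Type*} [Fintype m] [Fintype n]
    [DecidableEq m] [DecidableEq n] [Invertible (2 : F)] (hψ : ψ ≠ 1) {A : Matrix m m F}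
    {B : Matrix n n F} (hA : A.IsSymm) (hB : B.IsSymm) (hA₀ : A.det ≠ 0) (hB₀ : B.det ≠ 0) :
    ∑ y : Matrix m n F, ψ (trace (yᵀ * A * y * B))
      = (quadraticChar F A.det : R) ^ Fintype.card n * (quadraticChar F B.det : R) ^ Fintype.card m
        * (∑ x, ψ (x ^ 2)) ^ (Fintype.card m * Fintype.card n) := by
  have hK : (B ⊗ₖ A).det ≠ 0 := by
    rw [det_kronecker]
    exact mul_ne_zero (pow_ne_zero _ hB₀) (pow_ne_zero _ hA₀)
  calc ∑ y : Matrix m n F, ψ (trace (yᵀ * A * y * B))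
      = ∑ u : n × m → F, ψ ((B ⊗ₖ A).toQuadraticForm' u) := by
        simp_rw [trace_transpose_mul_mul_mul_eq_toQuadraticForm', hB.eq]
        exact Fintype.sum_bijective _ vec_bijective _ _ fun _ => rfl
    _ = _ := by
        rw [sum_addChar_toQuadraticForm' hψ (hB.kronecker hA) hK, det_kronecker, map_mul,
          map_pow, map_pow, Fintype.card_prod]
        push_cast
        ring

end FiniteField

theorem ZMod.natCast_finVal_bijective (q : ℕ) [NeZero q] :
    Function.Bijective fun a : Fin q => ((a : ℕ) : ZMod q) := by
  refine (Fintype.bijective_iff_injective_and_card _).2 ⟨fun a b h => Fin.ext ?_, by simp⟩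
  simpa [ZMod.val_cast_of_lt a.isLt, ZMod.val_cast_of_lt b.isLt] using congrArg ZMod.val h

theorem G1_eq_sum_stdAddChar (q : ℕ) [NeZero q] :
    G1 q = ∑ x : ZMod q, ZMod.stdAddChar (x ^ 2) := by
  refine Fintype.sum_bijective _ (ZMod.natCast_finVal_bijective q) _ _ fun a => ?_
  have hsq : ((a : ℕ) : ZMod q) ^ 2 = ((((a : ℕ) ^ 2 : ℕ) : ℤ) : ZMod q) := by push_cast; rfl
  rw [hsq, ZMod.stdAddChar_coe]
  push_cast
  ring_nf

theorem GS_two_smul_eq_sum_stdAddChar {r d q : ℕ} [NeZero q] (J : Matrix (Fin r) (Fin r) ℤ)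
    (M : Matrix (Fin d) (Fin d) ℤ) :
    GS r d q (2 • J) M = ∑ y : Matrix (Fin r) (Fin d) (ZMod q),
      ZMod.stdAddChar (trace (yᵀ * J.map (Int.cast : ℤ → ZMod q) * y * M.map Int.cast)) := by
  let e : Matrix (Fin r) (Fin d) (Fin q) ≃ Matrix (Fin r) (Fin d) (ZMod q) :=
    (Equiv.ofBijective _ (ZMod.natCast_finVal_bijective q)).mapMatrix
  refine Fintype.sum_equiv e _ _ fun x => ?_
  set X := x.map fun a => ((a : ℕ) : ℤ)
  set Y := X.map (Int.cast : ℤ → ZMod q)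
  have hcast : e x = Y := by ext; simp [e, X, Y]
  have htrace : trace (Yᵀ * J.map (Int.cast : ℤ → ZMod q) * Y * M.map Int.cast)
      = ((trace (Xᵀ * J * X * M) : ℤ) : ZMod q) := by
    simp [Y, trace, mul_apply]
  have htwo : trace (Xᵀ * (2 • J) * X * M) = 2 * trace (Xᵀ * J * X * M) := by
    rw [Matrix.mul_smul, Matrix.smul_mul, Matrix.smul_mul, trace_smul, nsmul_eq_mul,
      Nat.cast_ofNat]
  rw [hcast, htrace, ZMod.stdAddChar_coe, htwo]
  push_cast
  ring_nf

theorem gauss_sum_odd_prime_eval_general (q : ℕ) [Fact q.Prime] (hq2 : q ≠ 2) (r d : ℕ)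
    (J : Matrix (Fin r) (Fin r) ℤ) (M : Matrix (Fin d) (Fin d) ℤ)
    (hJs : J.IsSymm) (hMs : M.IsSymm)
    (hJu : IsUnit (((2 • J).map (Int.cast : ℤ → ZMod q)).det))
    (hMu : IsUnit ((M.map (Int.cast : ℤ → ZMod q)).det)) :
    GS r d q (2 • J) M =
      ((legendreSym q J.det : ℤ) : ℂ) ^ d * ((legendreSym q M.det : ℤ) : ℂ) ^ r *
        (G1 q) ^ (r * d) := by
  have : Invertible (2 : ZMod q) :=
    invertibleOfNonzero (Ring.two_ne_zero (by rwa [ZMod.ringChar_zmod_n]))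
  have hJ₀ : (J.map (Int.cast : ℤ → ZMod q)).det ≠ 0 := by
    rw [← Int.cast_det, ← natCast_zsmul, det_smul, Fintype.card_fin, Int.cast_mul] at hJu
    rw [← Int.cast_det]
    exact (isUnit_of_mul_isUnit_right hJu).ne_zero
  have hψ : (ZMod.stdAddChar : AddChar (ZMod q) ℂ) ≠ 1 := by
    simpa using ZMod.isPrimitive_stdAddChar q one_ne_zero
  rw [GS_two_smul_eq_sum_stdAddChar, G1_eq_sum_stdAddChar,
    sum_addChar_trace_transpose_mul_mul_mul hψ (hJs.map _) (hMs.map _) hJ₀ hMu.ne_zero,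
    legendreSym, legendreSym, Int.cast_det, Int.cast_det]
  simp only [Fintype.card_fin]

/-- For an odd prime `q`, `J' = 2J` even integral symmetric and `M'` integral symmetric,
both invertible mod `q`: `G_{J',M'}(q) = (det(J'/2)/q)^d (det M'/q)^r G₁(q)^{rd}`. -/
theorem gauss_sum_odd_prime_eval (q : ℕ) [Fact q.Prime] (hq2 : q ≠ 2) (r d : ℕ)
    (hr : 0 < r) (hd : 0 < d)
    (J : Matrix (Fin r) (Fin r) ℤ) (M : Matrix (Fin d) (Fin d) ℤ)
    (hJs : J.IsSymm) (hMs : M.IsSymm)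
    (hJu : IsUnit (((2 • J).map (Int.cast : ℤ → ZMod q)).det))
    (hMu : IsUnit ((M.map (Int.cast : ℤ → ZMod q)).det)) :
    GS r d q (2 • J) M =
      ((legendreSym q J.det : ℤ) : ℂ) ^ d * ((legendreSym q M.det : ℤ) : ℂ) ^ r *
        (G1 q) ^ (r * d) :=
  gauss_sum_odd_prime_eval_general q hq2 r d J M hJs hMs hJu hMu
end

section
/- Let J' and M' be even integral symmetric matrices of sizes r×r and d×d respectively (r, d > 0), both invertible modulo 2. Then G_{J',M'}(2) = Σ_{x ∈ (ℤ/2ℤ)^{r×d}} exp(πi·Tr(ᵗx J' x M')) = 2^{rd/2}. In particular r and d are both even. -/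
open Matrix

/-!
Reduce mod 2. On `V = (ZMod 2)^r` the form of `J` is alternating (even diagonal) and
nondegenerate, so it has a Lagrangian `W = W^⊥`, which forces `r = 2 dim W`; likewise `d` is even.
Write `x̃` for the `0/1` lift of `x` and `Q(X) = Tr(ᵗX J X M)`. The summand `ε(x) = i^{Q(x̃)}`
satisfies `ε(x + y) = ε(x) ε(y) (-1)^{β(x,y)}` with `β(x,y) = Tr(ᵗx J y M) mod 2`, and `ε = 1` on
the space `L` of matrices whose columns lie in `W`. As `M` is invertible mod 2, `L` is its own
`β`-orthogonal, so averaging over translates by `L` gives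
`|L| · Σ ε = Σ_x ε(x) Σ_{w ∈ L} (-1)^{β(w,x)} = |L|²`, i.e. `G = |L| = 2^{(r/2)d}`.
-/

open Module

namespace LinearMap.BilinForm

variable {R K M V : Type*}

theorem IsSymm.apply_add_sub_two_smul_self [CommRing R] [AddCommGroup M] [Module R M]
    {B : LinearMap.BilinForm R M} (hB : B.IsSymm) (x y z : M) :
    B (x + y - (2 : R) • z) (x + y - (2 : R) • z) =
      B x x + B y y + 2 * B x y + 4 * (B z z - B (x + y) z) := by
  simp only [map_add, map_sub, map_smul, LinearMap.add_apply, LinearMap.sub_apply,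
    LinearMap.smul_apply, smul_eq_mul]
  rw [hB.eq y x, hB.eq z x, hB.eq z y]
  ring

variable [Field K] [AddCommGroup V] [Module K V] [FiniteDimensional K V]
  {B : LinearMap.BilinForm K V}

theorem exists_orthogonal_eq_self (hB : B.IsAlt) : ∃ W : Submodule K V, B.orthogonal W = W := by
  obtain ⟨W, hW⟩ := exists_maximal_of_wellFoundedGT (fun W : Submodule K V ↦ W ≤ B.orthogonal W)
    ⟨⊥, bot_le⟩
  refine ⟨W, le_antisymm (fun v hv ↦ ?_) hW.prop⟩
  have hiso : W ⊔ K ∙ v ≤ B.orthogonal (W ⊔ K ∙ v) := by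
    rintro _ ha _ hb
    obtain ⟨w, hw, _, hc, rfl⟩ := Submodule.mem_sup.1 ha
    obtain ⟨w', hw', _, hc', rfl⟩ := Submodule.mem_sup.1 hb
    obtain ⟨c, rfl⟩ := Submodule.mem_span_singleton.1 hc
    obtain ⟨c', rfl⟩ := Submodule.mem_span_singleton.1 hc'
    simp [hW.prop hw w' hw', hv w' hw', hB.isRefl _ _ (hv w hw), hB.self_eq_zero]
  exact hW.eq_of_le hiso le_sup_left ▸ Submodule.mem_sup_right (Submodule.mem_span_singleton_self v)

theorem finrank_eq_two_mul_of_orthogonal_eq_self (hB : B.Nondegenerate) {W : Submodule K V}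
    (hW : B.orthogonal W = W) : finrank K V = 2 * finrank K W := by
  have h := finrank_orthogonal hB W
  rw [hW] at h
  have := Submodule.finrank_le W
  omega

end LinearMap.BilinForm

section CharacterSum

variable {K G : Type*} [Field K] [AddCommGroup G] [Module K G] [Fintype G] {ψ : AddChar K ℂ}

theorem AddChar.sum_comp_linearMap_eq_zero (hψ : ψ ≠ 0) {f : G →ₗ[K] K} (hf : f ≠ 0) :
    ∑ x, ψ (f x) = 0 := by
  refine (AddChar.sum_eq_zero_iff_ne_zero (ψ := ψ.compAddMonoidHom f.toAddMonoidHom)).2 fun h ↦ ?_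
  obtain ⟨x, hx⟩ := DFunLike.ne_iff.1 hf
  obtain ⟨t, ht⟩ := AddChar.ne_zero_iff.1 hψ
  exact ht (by simpa [div_mul_cancel₀ t hx] using DFunLike.congr_fun h ((t / f x) • x))

theorem sum_eq_card_of_orthogonal_eq_self (hψ : ψ ≠ 0) {β : LinearMap.BilinForm K G}
    {f : G → ℂ} (hf : ∀ x y, f (x + y) = f x * f y * ψ (β x y))
    {L : Submodule K G} (hL : β.orthogonal L = L) (hfL : ∀ w ∈ L, f w = 1) :
    ∑ x, f x = Nat.card L := by
  classical
  have hchar (x : G) : ∑ w : L, ψ (β w x) = if x ∈ L then (Nat.card L : ℂ) else 0 := by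
    split_ifs with hx
    · rw [← hL] at hx
      simp [hx _ (Subtype.prop _), Nat.card_eq_fintype_card]
    · refine AddChar.sum_comp_linearMap_eq_zero hψ (f := (β.flip x).domRestrict L) fun h ↦ hx ?_
      rw [← hL]
      exact fun w hw ↦ DFunLike.congr_fun h ⟨w, hw⟩
  have hcard : (Nat.card L : ℂ) ≠ 0 := by simp [Nat.card_eq_fintype_card, Fintype.card_ne_zero]
  refine mul_left_cancel₀ hcard ?_
  calc (Nat.card L : ℂ) * ∑ x, f x = ∑ w : L, ∑ x, f (w + x) := by
        simp [Nat.card_eq_fintype_card,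
          fun w : G ↦ Fintype.sum_equiv (Equiv.addLeft w) (fun x ↦ f (w + x)) f fun _ ↦ rfl]
    _ = ∑ x, f x * ∑ w : L, ψ (β w x) := by
        rw [Finset.sum_comm]
        simp [hf, hfL, Finset.mul_sum]
    _ = ∑ x ∈ Finset.univ.filter (· ∈ L), f x * Nat.card L := by
        simp [hchar, Finset.sum_filter]
    _ = Nat.card L * Nat.card L := by
        rw [Finset.sum_congr rfl fun x hx ↦ by rw [hfL x (Finset.mem_filter.1 hx).2, one_mul],
          Finset.sum_const, nsmul_eq_mul, ← Fintype.card_subtype, Nat.card_eq_fintype_card]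

end CharacterSum

namespace Matrix

theorem exists_eq_add_transpose {n : Type*} [LinearOrder n] {J : Matrix n n ℤ} (hJs : J.IsSymm)
    (hJe : ∀ i, 2 ∣ J i i) : ∃ U, J = U + Uᵀ := by
  refine ⟨of fun i j ↦ if i < j then J i j else if i = j then J i i / 2 else 0, ?_⟩
  ext i j
  rcases lt_trichotomy i j with h | rfl | h
  · simp [h, h.not_gt, h.ne']
  · have := hJe i
    simp only [add_apply, of_apply, lt_self_iff_false, ↓reduceIte, transpose_apply]
    omega
  · simp [h, h.not_gt, h.ne', hJs.apply i j]

variable {m n p R : Type*} [CommRing R]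

theorem dotProduct_mulVec_add_transpose_self [Fintype n] (U : Matrix n n R) (v : n → R) :
    v ⬝ᵥ (U + Uᵀ) *ᵥ v = 2 * (v ⬝ᵥ U *ᵥ v) := by
  rw [add_mulVec, dotProduct_add, mulVec_transpose, dotProduct_comm v (v ᵥ* U),
    ← dotProduct_mulVec]
  ring

theorem trace_mul_add_transpose [Fintype n] {C : Matrix n n R} (hC : C.IsSymm) (N : Matrix n n R) :
    trace (C * (N + Nᵀ)) = 2 * trace (C * N) := by
  rw [mul_add, trace_add, ← trace_transpose (C * Nᵀ), transpose_mul, transpose_transpose, hC.eq,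
    trace_mul_comm N]
  ring

def colSubmodule (W : Submodule R (m → R)) (n : Type*) : Submodule R (Matrix m n R) where
  carrier := {x | ∀ j, xᵀ j ∈ W}
  add_mem' hx hy j := W.add_mem (hx j) (hy j)
  zero_mem' _ := W.zero_mem
  smul_mem' c _ hx j := W.smul_mem c (hx j)

theorem card_colSubmodule [Fintype n] (W : Submodule R (m → R)) :
    Nat.card (colSubmodule W n) = Nat.card W ^ Fintype.card n := by
  let e : colSubmodule W n ≃ (n → W) :=
    { toFun x j := ⟨(x : Matrix m n R)ᵀ j, x.2 j⟩
      invFun w := ⟨(of fun j ↦ (w j : m → R))ᵀ, fun j ↦ (w j).2⟩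
      left_inv _ := rfl
      right_inv _ := rfl }
  rw [Nat.card_congr e, Nat.card_fun, Nat.card_eq_fintype_card (α := n)]

theorem transpose_mul_mul_eq_zero [Fintype m] [DecidableEq m] {A : Matrix m m R}
    {W : Submodule R (m → R)} {x : Matrix m n R} {y : Matrix m p R} (hx : x ∈ colSubmodule W n)
    (hy : y ∈ colSubmodule ((toBilin' A).orthogonal W) p) : xᵀ * A * y = 0 := by
  ext k l
  have := hy l _ (hx k)
  rw [toBilin'_apply', dotProduct_mulVec] at this
  exact this

variable [Fintype m] [Fintype n]

/-- Its diagonal `Tr(ᵗx A x B)` is the exponent in `GS`. -/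
def traceForm (A : Matrix m m R) (B : Matrix n n R) : LinearMap.BilinForm R (Matrix m n R) :=
  LinearMap.mk₂ R (fun x y ↦ trace (xᵀ * A * y * B))
    (by simp [Matrix.add_mul]) (by simp) (by simp [Matrix.mul_add, Matrix.add_mul]) (by simp)

@[simp]
theorem traceForm_apply (A : Matrix m m R) (B : Matrix n n R) (x y : Matrix m n R) :
    traceForm A B x y = trace (xᵀ * A * y * B) := rfl

theorem isSymm_traceForm {A : Matrix m m R} {B : Matrix n n R} (hA : A.IsSymm) (hB : B.IsSymm) :
    (traceForm A B).IsSymm := by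
  refine ⟨fun x y ↦ ?_⟩
  rw [traceForm_apply, traceForm_apply, ← trace_transpose]
  simp only [transpose_mul, transpose_transpose, hA.eq, hB.eq]
  rw [trace_mul_comm, trace_mul_comm _ B, trace_mul_comm B]
  simp only [Matrix.mul_assoc]

theorem map_traceForm {S : Type*} [CommRing S] (f : R →+* S) (A : Matrix m m R) (B : Matrix n n R)
    (x y : Matrix m n R) :
    f (traceForm A B x y) = traceForm (A.map f) (B.map f) (x.map f) (y.map f) := by
  simp [AddMonoidHom.map_trace, Matrix.map_mul, transpose_map]

theorem orthogonal_colSubmodule {K : Type*} [Field K] [DecidableEq m] [DecidableEq n]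
    (A : Matrix m m K) {B : Matrix n n K} (hB : IsUnit B) (W : Submodule K (m → K)) :
    (traceForm A B).orthogonal (colSubmodule W n) = colSubmodule ((toBilin' A).orthogonal W) n := by
  ext x
  refine ⟨fun hx j w hw ↦ ?_, fun hx y hy ↦ ?_⟩
  · have hφ : w ᵥ* A ᵥ* x ᵥ* B = 0 := by
      ext k
      have hmem : vecMulVec w (Pi.single k 1) ∈ colSubmodule W n := fun j ↦ by
        convert W.smul_mem ((Pi.single k 1 : n → K) j) hw using 1
        ext i
        simp [vecMulVec_apply, mul_comm]
      simpa [transpose_vecMulVec, vecMulVec_mul] using hx _ hmem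
    have hφ' : w ᵥ* A ᵥ* x = 0 :=
      vecMul_injective_iff_isUnit.2 hB (hφ.trans (zero_vecMul B).symm)
    rw [toBilin'_apply', dotProduct_mulVec]
    exact congrFun hφ' j
  · rw [traceForm_apply, transpose_mul_mul_eq_zero hy hx, Matrix.zero_mul, trace_zero]

end Matrix

section ModTwo

variable {m n : Type*}

def intLift (x : Matrix m n (ZMod 2)) : Matrix m n ℤ := x.map fun a ↦ (a.val : ℤ)

@[simp]
theorem map_intLift (x : Matrix m n (ZMod 2)) :
    (intLift x).map (Int.cast : ℤ → ZMod 2) = x := by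
  ext
  simp [intLift]

theorem intLift_add (x y : Matrix m n (ZMod 2)) :
    intLift (x + y) = intLift x + intLift y - (2 : ℤ) • (intLift x ⊙ intLift y) := by
  ext i j
  simp only [intLift, map_apply, Matrix.add_apply, Matrix.sub_apply, Matrix.smul_apply,
    hadamard_apply, smul_eq_mul]
  generalize x i j = a, y i j = b
  revert a b
  decide

variable [Fintype m] [Fintype n]

theorem isAlt_toBilin'_map_intCast [LinearOrder m] {J : Matrix m m ℤ} (hJs : J.IsSymm)
    (hJe : ∀ i, 2 ∣ J i i) : (toBilin' (J.map (Int.cast : ℤ → ZMod 2))).IsAlt := by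
  obtain ⟨U, rfl⟩ := exists_eq_add_transpose hJs hJe
  intro v
  rw [toBilin'_apply', Matrix.map_add _ Int.cast_add, transpose_map,
    dotProduct_mulVec_add_transpose_self]
  exact zero_mul _

theorem exists_orthogonal_eq_self_map_intCast [LinearOrder m] {J : Matrix m m ℤ}
    (hJs : J.IsSymm) (hJe : ∀ i, 2 ∣ J i i) (hJu : IsUnit (J.map (Int.cast : ℤ → ZMod 2)).det) :
    ∃ W : Submodule (ZMod 2) (m → ZMod 2),
      (toBilin' (J.map (Int.cast : ℤ → ZMod 2))).orthogonal W = W ∧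
        Fintype.card m = 2 * finrank (ZMod 2) W := by
  obtain ⟨W, hW⟩ :=
    LinearMap.BilinForm.exists_orthogonal_eq_self (isAlt_toBilin'_map_intCast hJs hJe)
  refine ⟨W, hW, ?_⟩
  rw [← finrank_fintype_fun_eq_card (ZMod 2)]
  exact LinearMap.BilinForm.finrank_eq_two_mul_of_orthogonal_eq_self
    (LinearMap.BilinForm.nondegenerate_toBilin'_iff_det_ne_zero.2 hJu.ne_zero) hW

noncomputable def gaussTerm (J : Matrix m m ℤ) (M : Matrix n n ℤ) (x : Matrix m n (ZMod 2)) : ℂ :=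
  Complex.exp (Real.pi * Complex.I * ((traceForm J M (intLift x) (intLift x) : ℂ) / 2))

theorem GS_two_eq_sum_gaussTerm {r d : ℕ} (J : Matrix (Fin r) (Fin r) ℤ)
    (M : Matrix (Fin d) (Fin d) ℤ) : GS r d 2 J M = ∑ x, gaussTerm J M x := by
  simp only [GS, Nat.cast_ofNat, gaussTerm, intLift, ZMod.natCast_val, traceForm_apply]
  rfl

variable {J : Matrix m m ℤ} {M : Matrix n n ℤ}

theorem gaussTerm_add (hJs : J.IsSymm) (hMs : M.IsSymm) (x y : Matrix m n (ZMod 2)) :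
    gaussTerm J M (x + y) = gaussTerm J M x * gaussTerm J M y *
      ZMod.stdAddChar (traceForm (J.map Int.cast) (M.map Int.cast) x y) := by
  set B := traceForm J M
  set X := intLift x
  set Y := intLift y
  have hcast : traceForm (J.map Int.cast) (M.map Int.cast) x y = ((B X Y : ℤ) : ZMod 2) := by
    rw [← eq_intCast (Int.castRingHom (ZMod 2)), map_traceForm, Int.coe_castRingHom, map_intLift,
      map_intLift]
  rw [hcast, ZMod.stdAddChar_coe, gaussTerm, gaussTerm, gaussTerm, intLift_add,
    (isSymm_traceForm hJs hMs).apply_add_sub_two_smul_self, ← Complex.exp_add, ← Complex.exp_add,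
    Complex.exp_eq_exp_iff_exists_int]
  exact ⟨B (X ⊙ Y) (X ⊙ Y) - B (X + Y) (X ⊙ Y), by push_cast; ring⟩

theorem gaussTerm_eq_one [DecidableEq m] [LinearOrder n] (hJs : J.IsSymm) (hMs : M.IsSymm)
    (hMe : ∀ i, 2 ∣ M i i) {W : Submodule (ZMod 2) (m → ZMod 2)}
    (hW : W ≤ (toBilin' (J.map Int.cast)).orthogonal W) {w : Matrix m n (ZMod 2)}
    (hw : w ∈ colSubmodule W n) : gaussTerm J M w = 1 := by
  -- with `M = N + ᵗN` the exponent is `2 Tr(C N)`, and `C ≡ 0 mod 2` as `W` is isotropic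
  obtain ⟨N, rfl⟩ := exists_eq_add_transpose hMs hMe
  set C := (intLift w)ᵀ * J * intLift w
  have hC : C.IsSymm := by simp [C, IsSymm, transpose_mul, hJs.eq, Matrix.mul_assoc]
  have hCN : 2 ∣ trace (C * N) := by
    have hC0 : C.map (Int.castRingHom (ZMod 2)) = 0 := by
      rw [Matrix.map_mul, Matrix.map_mul, transpose_map]
      simp only [Int.coe_castRingHom, map_intLift]
      exact transpose_mul_mul_eq_zero hw fun j ↦ hW (hw j)
    have := (ZMod.intCast_zmod_eq_zero_iff_dvd (trace (C * N)) 2).1 <| by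
      rw [← eq_intCast (Int.castRingHom (ZMod 2)), AddMonoidHom.map_trace, Matrix.map_mul, hC0,
        Matrix.zero_mul, trace_zero]
    exact_mod_cast this
  obtain ⟨k, hk⟩ := hCN
  rw [gaussTerm, traceForm_apply, trace_mul_add_transpose hC, hk]
  convert Complex.exp_int_mul_two_pi_mul_I k using 2
  push_cast
  ring

end ModTwo

theorem gauss_sum_two_even_even_general (r d : ℕ)
    (J : Matrix (Fin r) (Fin r) ℤ) (M : Matrix (Fin d) (Fin d) ℤ)
    (hJs : J.IsSymm) (hMs : M.IsSymm)
    (hJe : ∀ i, 2 ∣ J i i) (hMe : ∀ i, 2 ∣ M i i)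
    (hJu : IsUnit ((J.map (Int.cast : ℤ → ZMod 2)).det))
    (hMu : IsUnit ((M.map (Int.cast : ℤ → ZMod 2)).det)) :
    Even r ∧ Even d ∧ GS r d 2 J M = (2 : ℂ) ^ (r * d / 2) := by
  obtain ⟨W, hW, hrW⟩ := exists_orthogonal_eq_self_map_intCast hJs hJe hJu
  obtain ⟨_, -, hdW⟩ := exists_orthogonal_eq_self_map_intCast hMs hMe hMu
  rw [Fintype.card_fin] at hrW hdW
  refine ⟨⟨_, hrW.trans (two_mul _)⟩, ⟨_, hdW.trans (two_mul _)⟩, ?_⟩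
  have hL : (traceForm (J.map Int.cast) (M.map Int.cast)).orthogonal (colSubmodule W (Fin d)) =
      colSubmodule W (Fin d) := by
    rw [orthogonal_colSubmodule _ ((isUnit_iff_isUnit_det _).2 hMu), hW]
  have hψ : (ZMod.stdAddChar : AddChar (ZMod 2) ℂ) ≠ 0 := AddChar.ne_zero_iff.2
    ⟨1, fun h ↦ one_ne_zero (ZMod.injective_stdAddChar (h.trans (AddChar.map_zero_eq_one _).symm))⟩
  rw [GS_two_eq_sum_gaussTerm, sum_eq_card_of_orthogonal_eq_self hψ (gaussTerm_add hJs hMs) hL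
    fun w hw ↦ gaussTerm_eq_one hJs hMs hMe hW.ge hw, card_colSubmodule,
    natCard_eq_pow_finrank (K := ZMod 2), Nat.card_zmod, Fintype.card_fin, ← pow_mul]
  push_cast
  congr 1
  generalize finrank (ZMod 2) W = k at hrW ⊢
  subst hrW
  rw [mul_assoc, Nat.mul_div_cancel_left _ two_pos]

/-- If `J'` and `M'` are even integral symmetric matrices (even diagonal) invertible
mod 2, then `r` and `d` are even and `G_{J',M'}(2) = 2^{rd/2}`. -/
theorem gauss_sum_two_even_even (r d : ℕ) (hr : 0 < r) (hd : 0 < d)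
    (J : Matrix (Fin r) (Fin r) ℤ) (M : Matrix (Fin d) (Fin d) ℤ)
    (hJs : J.IsSymm) (hMs : M.IsSymm)
    (hJe : ∀ i, 2 ∣ J i i) (hMe : ∀ i, 2 ∣ M i i)
    (hJu : IsUnit ((J.map (Int.cast : ℤ → ZMod 2)).det))
    (hMu : IsUnit ((M.map (Int.cast : ℤ → ZMod 2)).det)) :
    Even r ∧ Even d ∧ GS r d 2 J M = (2 : ℂ) ^ (r * d / 2) :=
  gauss_sum_two_even_even_general r d J M hJs hMs hJe hMe hJu hMu
end

section
/- Suppose J' is an r×r integral symmetric matrix invertible mod 2 with J' ≡ I_{r'} ⊥ 3I_{r-r'} (mod 4), and M' is a d×d integral symmetric matrix invertible mod 2 with M' ≡ I_{d'} ⊥ 3I_{d-d'} (mod 4). Then G_{J',M'}(2) = Σ_{x ∈ (ℤ/2ℤ)^{r×d}} exp(πi·Tr(ᵗxJ'xM')) = (2i)^{rd/2}·(-i)^{2r'd' - rd' - r'd}. (Equivalently, the sum factors as (1+i)^{r'd'}(1-i)^{r'(d-d')+(r-r')d'}(1+i)^{(r-r')(d-d')}.) -/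
open Matrix

lemma I_pow_mod_four (m : ℕ) : Complex.I ^ m = Complex.I ^ (m % 4) := by
  conv_lhs => rw [← Nat.div_add_mod m 4]
  rw [pow_add, pow_mul, Complex.I_pow_four, one_pow, one_mul]

noncomputable def phi (a : ZMod 4) : ℂ := Complex.I ^ a.val

lemma phi_zero : phi 0 = 1 := rfl

lemma phi_add (a b : ZMod 4) : phi (a + b) = phi a * phi b := by
  unfold phi
  rw [ZMod.val_add, ← I_pow_mod_four, pow_add]

lemma phi_sum {ι : Type*} (s : Finset ι) (f : ι → ZMod 4) :
    phi (∑ i ∈ s, f i) = ∏ i ∈ s, phi (f i) := by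
  induction s using Finset.cons_induction with
  | empty => simp [phi_zero]
  | cons a s ha ih => rw [Finset.sum_cons, Finset.prod_cons, phi_add, ih]

lemma exp_pi_I_div_two : Complex.exp ((Real.pi : ℂ) * Complex.I / 2) = Complex.I := by
  rw [show ((Real.pi : ℂ) * Complex.I / 2) = ((Real.pi : ℂ)/2) * Complex.I by ring,
    Complex.exp_mul_I,
    show ((Real.pi : ℂ)/2) = ((Real.pi/2 : ℝ) : ℂ) by push_cast; ring,
    ← Complex.ofReal_cos, ← Complex.ofReal_sin, Real.cos_pi_div_two, Real.sin_pi_div_two]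
  simp

lemma exp_eq_phi (t : ℤ) :
    Complex.exp ((Real.pi : ℂ) * Complex.I * ((t : ℂ) / 2)) = phi ((t : ZMod 4)) := by
  obtain ⟨k, hk⟩ : (4:ℤ) ∣ t - (((t : ZMod 4).val : ℤ)) := by
    apply (ZMod.intCast_zmod_eq_zero_iff_dvd _ 4).mp
    push_cast
    simp [ZMod.natCast_val, ZMod.cast_id]
  have ht : (t : ℂ) = (((t : ZMod 4).val : ℕ) : ℂ) + 4 * (k : ℂ) := by
    have : t = ((t : ZMod 4).val : ℤ) + 4 * k := by linarith [hk]
    exact_mod_cast congrArg (Int.cast : ℤ → ℂ) this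
  rw [ht]
  rw [show (Real.pi : ℂ) * Complex.I * (((((t : ZMod 4).val : ℕ) : ℂ) + 4 * (k : ℂ)) / 2)
      = (((t : ZMod 4).val : ℕ) : ℂ) * ((Real.pi : ℂ) * Complex.I / 2)
        + (k : ℂ) * (2 * (Real.pi : ℂ) * Complex.I) by ring]
  rw [Complex.exp_add, Complex.exp_int_mul_two_pi_mul_I, mul_one,
    Complex.exp_nat_mul, exp_pi_I_div_two]
  rfl

lemma trace_cast {n : ℕ} (A : Matrix (Fin n) (Fin n) ℤ) :
    ((Matrix.trace A : ℤ) : ZMod 4) = Matrix.trace (A.map (Int.cast : ℤ → ZMod 4)) := by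
  simp [Matrix.trace, Matrix.diag, Matrix.map_apply]

lemma trace_diag_quad {r d : ℕ} (Y : Matrix (Fin r) (Fin d) (ZMod 4))
    (cJ : Fin r → ZMod 4) (cM : Fin d → ZMod 4) :
    Matrix.trace (Yᵀ * Matrix.diagonal cJ * Y * Matrix.diagonal cM)
      = ∑ i : Fin r, ∑ k : Fin d, cJ i * cM k * (Y i k * Y i k) := by
  simp only [Matrix.trace, Matrix.diag_apply, Matrix.mul_apply, Matrix.diagonal_apply,
    Matrix.transpose_apply, ite_mul, mul_ite, zero_mul, mul_zero, Finset.sum_ite_eq,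
    Finset.sum_ite_eq', Finset.mem_univ, if_true, Finset.sum_mul, Finset.mul_sum]
  rw [Finset.sum_comm]
  exact Finset.sum_congr rfl fun i _ => Finset.sum_congr rfl fun k _ => by ring

lemma fin2_sq (a : Fin 2) : ((a : ℕ) : ZMod 4) * ((a : ℕ) : ZMod 4) = ((a : ℕ) : ZMod 4) := by
  fin_cases a <;> decide

lemma card_filter_lt (n m : ℕ) (h : m ≤ n) :
    (Finset.univ.filter fun i : Fin n => (i : ℕ) < m).card = m := by
  have he : (Finset.univ.filter fun i : Fin n => (i : ℕ) < m)
      = Finset.map (Fin.castLEEmb h) Finset.univ := by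
    ext i
    simp only [Finset.mem_filter, Finset.mem_univ, true_and, Finset.mem_map]
    constructor
    · intro hi; exact ⟨⟨(i : ℕ), hi⟩, Fin.ext rfl⟩
    · rintro ⟨j, rfl⟩; exact j.isLt
  rw [he, Finset.card_map, Finset.card_univ, Fintype.card_fin]

lemma prod_ite_pow (n m : ℕ) (h : m ≤ n) (A B : ℂ) :
    (∏ i : Fin n, if (i : ℕ) < m then A else B) = A ^ m * B ^ (n - m) := by
  rw [Finset.prod_ite, Finset.prod_const, Finset.prod_const, card_filter_lt n m h]
  congr 2
  have := Finset.card_filter_add_card_filter_not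
    (s := (Finset.univ : Finset (Fin n))) (p := fun i : Fin n => (i : ℕ) < m)
  rw [card_filter_lt n m h] at this
  simp only [Finset.card_univ, Fintype.card_fin] at this
  omega

lemma phi_one : phi 1 = Complex.I := by
  show Complex.I ^ (1 : ZMod 4).val = Complex.I
  rw [show (1 : ZMod 4).val = 1 from rfl, pow_one]

lemma phi_three : phi 3 = -Complex.I := by
  show Complex.I ^ (3 : ZMod 4).val = -Complex.I
  rw [show (3 : ZMod 4).val = 3 from rfl]
  rw [pow_succ, Complex.I_sq]
  ring


set_option maxHeartbeats 1000000 in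
/-- If `J' ≡ I_{r'} ⊥ 3I_{r-r'}` and `M' ≡ I_{d'} ⊥ 3I_{d-d'}` mod 4 (both odd diagonal,
invertible mod 2), then
`G_{J',M'}(2) = (1+i)^{r'd'}·(1-i)^{r'(d-d') + (r-r')d'}·(1+i)^{(r-r')(d-d')}`,
i.e. `(2i)^{rd/2}·(-i)^{2r'd'-rd'-r'd}` in the paper's notation. -/
theorem gauss_sum_two_odd_odd (r d r' d' : ℕ) (hr : 0 < r) (hd : 0 < d)
    (hr' : r' ≤ r) (hd' : d' ≤ d)
    (J : Matrix (Fin r) (Fin r) ℤ) (M : Matrix (Fin d) (Fin d) ℤ)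
    (hJs : J.IsSymm) (hMs : M.IsSymm)
    (hJ : J.map (Int.cast : ℤ → ZMod 4) =
      Matrix.of fun (i j : Fin r) => if i = j then (if (i : ℕ) < r' then 1 else 3) else 0)
    (hM : M.map (Int.cast : ℤ → ZMod 4) =
      Matrix.of fun (i j : Fin d) => if i = j then (if (i : ℕ) < d' then 1 else 3) else 0) :
    GS r d 2 J M =
      (1 + Complex.I) ^ (r' * d') *
        (1 - Complex.I) ^ (r' * (d - d') + (r - r') * d') *
        (1 + Complex.I) ^ ((r - r') * (d - d')) := by
  unfold GS
  classical
  set cJ : Fin r → ZMod 4 := fun i => if (i : ℕ) < r' then 1 else 3 with hcJ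
  set cM : Fin d → ZMod 4 := fun k => if (k : ℕ) < d' then 1 else 3 with hcM
  have hJ' : J.map (Int.cast : ℤ → ZMod 4) = Matrix.diagonal cJ := hJ
  have hM' : M.map (Int.cast : ℤ → ZMod 4) = Matrix.diagonal cM := hM
  have key : ∀ y : Fin r → Fin d → Fin 2,
      ((Matrix.trace (((Matrix.of y).map fun a => ((a : ℕ) : ℤ))ᵀ * J *
          ((Matrix.of y).map fun a => ((a : ℕ) : ℤ)) * M) : ℤ) : ZMod 4)
        = ∑ i : Fin r, ∑ k : Fin d, cJ i * cM k * ((y i k : ℕ) : ZMod 4) := by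
    intro y
    rw [trace_cast]
    have hJ'' : J.map ⇑(Int.castRingHom (ZMod 4)) = Matrix.diagonal cJ := hJ'
    have hM'' : M.map ⇑(Int.castRingHom (ZMod 4)) = Matrix.diagonal cM := hM'
    rw [show (Int.cast : ℤ → ZMod 4) = ⇑(Int.castRingHom (ZMod 4)) from rfl]
    rw [Matrix.map_mul, Matrix.map_mul, Matrix.map_mul, Matrix.transpose_map,
      Matrix.map_map, hJ'', hM'']
    rw [show (⇑(Int.castRingHom (ZMod 4)) ∘ fun a : Fin 2 => ((a : ℕ) : ℤ))
        = fun a : Fin 2 => ((a : ℕ) : ZMod 4) from funext fun a => by simp]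
    rw [trace_diag_quad]
    exact Finset.sum_congr rfl fun i _ => Finset.sum_congr rfl fun k _ => by
      rw [Matrix.map_apply, Matrix.of_apply, fin2_sq]
  rw [← Equiv.sum_comp (Matrix.of : (Fin r → Fin d → Fin 2) ≃ Matrix (Fin r) (Fin d) (Fin 2))]
  have step : ∀ y : Fin r → Fin d → Fin 2,
      Complex.exp ((Real.pi : ℂ) * Complex.I *
        (((Matrix.trace (((Matrix.of y).map fun a => ((a : ℕ) : ℤ))ᵀ * J *
          ((Matrix.of y).map fun a => ((a : ℕ) : ℤ)) * M) : ℤ) : ℂ) / ((2:ℕ) : ℂ)))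
      = ∏ i : Fin r, ∏ k : Fin d, phi (cJ i * cM k * ((y i k : ℕ) : ZMod 4)) := by
    intro y
    rw [show ((2:ℕ) : ℂ) = 2 from by norm_num, exp_eq_phi, key y, phi_sum]
    exact Finset.prod_congr rfl fun i _ => phi_sum _ _
  calc (∑ y : Fin r → Fin d → Fin 2,
        Complex.exp ((Real.pi : ℂ) * Complex.I *
          (((Matrix.trace (((Matrix.of y).map fun a => ((a : ℕ) : ℤ))ᵀ * J *
            ((Matrix.of y).map fun a => ((a : ℕ) : ℤ)) * M) : ℤ) : ℂ) / ((2:ℕ) : ℂ))))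
      = ∑ y : Fin r → Fin d → Fin 2,
          ∏ i : Fin r, ∏ k : Fin d, phi (cJ i * cM k * ((y i k : ℕ) : ZMod 4)) :=
        Finset.sum_congr rfl fun y _ => step y
    _ = ∏ i : Fin r, ∑ z : Fin d → Fin 2, ∏ k : Fin d, phi (cJ i * cM k * ((z k : ℕ) : ZMod 4)) :=
        (Fintype.prod_sum (κ := fun _ : Fin r => Fin d → Fin 2)
          (fun i z => ∏ k : Fin d, phi (cJ i * cM k * ((z k : ℕ) : ZMod 4)))).symm
    _ = ∏ i : Fin r, ∏ k : Fin d, ∑ v : Fin 2, phi (cJ i * cM k * ((v : ℕ) : ZMod 4)) :=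
        Finset.prod_congr rfl fun i _ =>
          (Fintype.prod_sum (κ := fun _ : Fin d => Fin 2)
            (fun k v => phi (cJ i * cM k * ((v : ℕ) : ZMod 4)))).symm
    _ = ∏ i : Fin r, ∏ k : Fin d, (1 + phi (cJ i * cM k)) := by
        refine Finset.prod_congr rfl fun i _ => Finset.prod_congr rfl fun k _ => ?_
        rw [Fin.sum_univ_two]
        norm_num [phi_zero]
    _ = ∏ i : Fin r, if (i : ℕ) < r'
          then (1 + Complex.I) ^ d' * (1 - Complex.I) ^ (d - d')
          else (1 - Complex.I) ^ d' * (1 + Complex.I) ^ (d - d') := by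
        refine Finset.prod_congr rfl fun i _ => ?_
        by_cases hi : (i : ℕ) < r'
        · simp only [hcJ, hi, if_true]
          rw [show (∏ k : Fin d, (1 + phi (1 * cM k)))
              = ∏ k : Fin d, if (k : ℕ) < d' then 1 + Complex.I else 1 - Complex.I from
            Finset.prod_congr rfl fun k _ => by
              by_cases hk : (k : ℕ) < d' <;>
                simp [hcM, hk, phi_one, phi_three, sub_eq_add_neg]]
          rw [prod_ite_pow d d' hd']
        · simp only [hcJ, hi, if_false]
          rw [show (∏ k : Fin d, (1 + phi (3 * cM k)))
              = ∏ k : Fin d, if (k : ℕ) < d' then 1 - Complex.I else 1 + Complex.I from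
            Finset.prod_congr rfl fun k _ => by
              by_cases hk : (k : ℕ) < d' <;>
                simp [hcM, hk, phi_one, phi_three, sub_eq_add_neg,
                  show (3 : ZMod 4) * 3 = 1 from by decide, show (3 : ZMod 4) * 1 = 3 from by decide]]
          rw [prod_ite_pow d d' hd']
    _ = ((1 + Complex.I) ^ d' * (1 - Complex.I) ^ (d - d')) ^ r'
          * ((1 - Complex.I) ^ d' * (1 + Complex.I) ^ (d - d')) ^ (r - r') :=
        prod_ite_pow r r' hr' _ _
    _ = (1 + Complex.I) ^ (r' * d') *
        (1 - Complex.I) ^ (r' * (d - d') + (r - r') * d') *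
        (1 + Complex.I) ^ ((r - r') * (d - d')) := by
        rw [mul_pow, mul_pow, ← pow_mul, ← pow_mul, ← pow_mul, ← pow_mul, pow_add]
        ring
end

section
/- Let Q be an m×m integral symmetric matrix with even diagonal entries, invertible over ℚ, and let N be a positive integer such that N·Q^{-1} is integral with even diagonal. Write N = q₁^{e₁}···q_s^{e_s} with distinct primes q_i and set N_i = N/q_i^{e_i}. Then for any n×n integral symmetric M and any U₁,...,U_s ∈ ℤ^{m×n}, setting U = N₁U₁ + ··· + N_sU_s, one has Tr(ᵗU Q^{-1} U M) ≡ Σ_{i=1}^s N_i² Tr(ᵗU_i Q^{-1} U_i M) (mod 2ℤ), i.e. the cross terms 2N_iN_j ᵗU_i Q^{-1} U_j contribute even integers to the trace. -/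
open Matrix Finset

lemma aux_even_sym_sum {s : ℕ} (c : Fin s → Fin s → ℤ) (hsym : ∀ i j, c i j = c j i) :
    ∃ z : ℤ, ∑ i, ∑ j ∈ Finset.univ.erase i, c i j = 2 * z := by
  classical
  have key : ∀ i : Fin s, ∑ j ∈ Finset.univ.erase i, c i j =
      ∑ j ∈ Finset.univ.filter (fun j => j < i), c i j +
      ∑ j ∈ Finset.univ.filter (fun j => i < j), c i j := by
    intro i
    rw [← Finset.sum_filter_add_sum_filter_not (Finset.univ.erase i) (fun j => j < i)]
    congr 1
    · congr 1
      ext j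
      simp only [Finset.mem_filter, Finset.mem_erase, Finset.mem_univ, and_true, true_and]
      constructor
      · rintro ⟨h1, h2⟩; exact h2
      · intro h; exact ⟨h.ne, h⟩
    · congr 1
      ext j
      simp only [Finset.mem_filter, Finset.mem_erase, Finset.mem_univ, and_true, true_and]
      constructor
      · rintro ⟨h1, h2⟩; exact lt_of_le_of_ne (not_lt.mp h2) (Ne.symm h1)
      · intro h; exact ⟨h.ne', not_lt.mpr h.le⟩
  have swap : ∑ i, ∑ j ∈ Finset.univ.filter (fun j => j < i), c i j =
      ∑ i, ∑ j ∈ Finset.univ.filter (fun j => i < j), c i j := by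
    rw [Finset.sum_comm' (t' := Finset.univ) (s' := fun j => Finset.univ.filter (fun i => j < i))]
    · exact Finset.sum_congr rfl fun j _ => Finset.sum_congr rfl fun i _ => hsym i j
    · intro i j
      simp
  refine ⟨∑ i, ∑ j ∈ Finset.univ.filter (fun j => i < j), c i j, ?_⟩
  simp only [key, Finset.sum_add_distrib, swap, two_mul]

lemma aux_trace_map {k : ℕ} (A : Matrix (Fin k) (Fin k) ℤ) :
    Matrix.trace (A.map (Int.cast : ℤ → ℚ)) = ((Matrix.trace A : ℤ) : ℚ) := by
  simp [Matrix.trace, Matrix.diag, Matrix.map_apply]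

/-- Cross terms vanish mod 2ℤ: with `Q` even integral symmetric invertible over ℚ,
`N·Q⁻¹` even integral, `N = ∏ qᵢ^{eᵢ}`, `Nᵢ = N/qᵢ^{eᵢ}`, `U = Σ NᵢUᵢ`:
`Tr(ᵗU Q⁻¹ U M) ≡ Σᵢ Nᵢ² Tr(ᵗUᵢ Q⁻¹ Uᵢ M) (mod 2ℤ)`. -/
theorem cross_terms_even (m n s : ℕ) (Q : Matrix (Fin m) (Fin m) ℤ)
    (hQs : Q.IsSymm) (hQe : ∀ i, 2 ∣ Q i i) (hQdet : Q.det ≠ 0)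
    (N : ℕ) (hNpos : 0 < N)
    (R : Matrix (Fin m) (Fin m) ℤ)
    (hR : R.map (Int.cast : ℤ → ℚ) = (N : ℚ) • (Q.map (Int.cast : ℤ → ℚ))⁻¹)
    (hRe : ∀ i, 2 ∣ R i i)
    (q e : Fin s → ℕ) (hq : ∀ i, (q i).Prime) (hinj : Function.Injective q)
    (he : ∀ i, 0 < e i) (hN : N = ∏ i, q i ^ e i)
    (Ni : Fin s → ℕ) (hNi : ∀ i, Ni i = N / q i ^ e i)
    (M : Matrix (Fin n) (Fin n) ℤ) (hMs : M.IsSymm)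
    (U : Fin s → Matrix (Fin m) (Fin n) ℤ) :
    ∃ z : ℤ,
      Matrix.trace (((∑ i, (Ni i : ℤ) • U i).map (Int.cast : ℤ → ℚ))ᵀ *
          (Q.map (Int.cast : ℤ → ℚ))⁻¹ *
          ((∑ i, (Ni i : ℤ) • U i).map (Int.cast : ℤ → ℚ)) *
          (M.map (Int.cast : ℤ → ℚ))) =
        (∑ i, (Ni i : ℚ) ^ 2 *
          Matrix.trace (((U i).map (Int.cast : ℤ → ℚ))ᵀ *
            (Q.map (Int.cast : ℤ → ℚ))⁻¹ *
            ((U i).map (Int.cast : ℤ → ℚ)) *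
            (M.map (Int.cast : ℤ → ℚ)))) + 2 * (z : ℚ) := by
  classical
  set Qi : Matrix (Fin m) (Fin m) ℚ := (Q.map (Int.cast : ℤ → ℚ))⁻¹ with hQi
  set Mq : Matrix (Fin n) (Fin n) ℚ := M.map (Int.cast : ℤ → ℚ) with hMq
  set A : Fin s → Matrix (Fin m) (Fin n) ℚ := fun i => (U i).map (Int.cast : ℤ → ℚ) with hA
  have hNQ : (N : ℚ) ≠ 0 := by exact_mod_cast hNpos.ne'
  -- Qi is symmetric
  have hQis : Qiᵀ = Qi := by
    rw [hQi, Matrix.transpose_nonsing_inv, ← Matrix.transpose_map, hQs]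
  -- R is symmetric
  have hRs : Rᵀ = R := by
    ext i j
    have h1 : R.map (Int.cast : ℤ → ℚ) j i = ((N : ℚ) • Qi) j i := by rw [hR]
    have h2 : R.map (Int.cast : ℤ → ℚ) i j = ((N : ℚ) • Qi) i j := by rw [hR]
    have hqq : Qi j i = Qi i j := (Matrix.IsSymm.apply hQis i j)
    have h3 : ((R j i : ℤ) : ℚ) = ((R i j : ℤ) : ℚ) := by
      have := h1
      have h2' := h2
      simp only [Matrix.map_apply, Matrix.smul_apply, smul_eq_mul] at this h2'
      rw [this, h2', hqq]
    exact_mod_cast h3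
  -- Qi in terms of R
  have hQiR : Qi = (N : ℚ)⁻¹ • R.map (Int.cast : ℤ → ℚ) := by
    rw [hR, smul_smul, inv_mul_cancel₀ hNQ, one_smul]
  -- arithmetic facts
  have hdvd1 : ∀ i, (q i ^ e i) * Ni i = N := by
    intro i
    rw [hNi, Nat.mul_div_cancel' (hN ▸ Finset.dvd_prod_of_mem _ (Finset.mem_univ i))]
  have hNiprod : ∀ i, Ni i = ∏ k ∈ Finset.univ.erase i, q k ^ e k := by
    intro i
    have h1 : (∏ k ∈ Finset.univ.erase i, q k ^ e k) * q i ^ e i = N :=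
      hN ▸ Finset.prod_erase_mul _ _ (Finset.mem_univ i)
    have h2 : q i ^ e i * Ni i = N := hdvd1 i
    have hpos : 0 < q i ^ e i := pow_pos (hq i).pos _
    have h3 : Ni i * q i ^ e i = (∏ k ∈ Finset.univ.erase i, q k ^ e k) * q i ^ e i := by
      rw [h1, ← h2]; ring
    exact Nat.eq_of_mul_eq_mul_right hpos h3
  have hdvdN : ∀ i j, i ≠ j → N ∣ Ni i * Ni j := by
    intro i j hij
    have h1 : q i ^ e i ∣ Ni j := by
      rw [hNiprod j]
      exact Finset.dvd_prod_of_mem _ (Finset.mem_erase.mpr ⟨hij, Finset.mem_univ i⟩)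
    calc N = q i ^ e i * Ni i := (hdvd1 i).symm
    _ ∣ Ni j * Ni i := mul_dvd_mul h1 dvd_rfl
    _ = Ni i * Ni j := mul_comm _ _
  -- the integer cross terms
  set c : Fin s → Fin s → ℤ := fun i j =>
    ((Ni i : ℤ) * (Ni j : ℤ) / (N : ℤ)) * Matrix.trace ((U i)ᵀ * R * U j * M) with hc
  -- map of products
  have hmap : ∀ i j, (((U i)ᵀ * R * U j * M).map (Int.cast : ℤ → ℚ)) =
      (A i)ᵀ * (R.map (Int.cast : ℤ → ℚ)) * A j * Mq := by
    intro i j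
    rw [show (Int.cast : ℤ → ℚ) = ⇑(Int.castRingHom ℚ) from rfl]
    rw [Matrix.map_mul, Matrix.map_mul, Matrix.map_mul, Matrix.transpose_map]
    rfl
  -- key rational identity for all i j
  have hkey : ∀ i j : Fin s, i ≠ j →
      (Ni i : ℚ) * (Ni j : ℚ) * Matrix.trace ((A i)ᵀ * Qi * A j * Mq) = ((c i j : ℤ) : ℚ) := by
    intro i j hij
    have hdvd : ((N : ℤ)) ∣ (Ni i : ℤ) * (Ni j : ℤ) := by exact_mod_cast hdvdN i j hij
    rw [hc]
    push_cast [Int.cast_div_charZero hdvd]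
    rw [← aux_trace_map, hmap i j, hQiR]
    rw [Matrix.mul_smul, Matrix.smul_mul, Matrix.smul_mul, Matrix.trace_smul, smul_eq_mul]
    field_simp
  -- symmetry of c
  have hcsym : ∀ i j, c i j = c j i := by
    intro i j
    have htr : Matrix.trace ((U i)ᵀ * R * U j * M) = Matrix.trace ((U j)ᵀ * R * U i * M) := by
      conv_lhs => rw [← Matrix.trace_transpose]
      rw [Matrix.transpose_mul, Matrix.transpose_mul, Matrix.transpose_mul,
        Matrix.transpose_transpose, hMs, hRs]
      rw [Matrix.trace_mul_comm]
      rw [Matrix.mul_assoc, Matrix.mul_assoc, ← Matrix.mul_assoc, ← Matrix.mul_assoc]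
    rw [hc]
    simp only
    rw [htr, mul_comm (Ni i : ℤ) (Ni j : ℤ)]
  -- bilinear expansion
  have hVmap : (∑ i, (Ni i : ℤ) • U i).map (Int.cast : ℤ → ℚ) = ∑ i, (Ni i : ℚ) • A i := by
    ext a b
    simp only [Matrix.map_apply, Matrix.sum_apply, Matrix.smul_apply, smul_eq_mul, hA,
      Matrix.map_apply]
    push_cast
    rfl
  have hexp : Matrix.trace (((∑ i, (Ni i : ℤ) • U i).map (Int.cast : ℤ → ℚ))ᵀ * Qi *
        ((∑ i, (Ni i : ℤ) • U i).map (Int.cast : ℤ → ℚ)) * Mq) =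
      ∑ i, ∑ j, (Ni i : ℚ) * (Ni j : ℚ) * Matrix.trace ((A i)ᵀ * Qi * A j * Mq) := by
    rw [hVmap, Matrix.transpose_sum]
    simp only [Matrix.transpose_smul, Matrix.sum_mul, Matrix.mul_sum, Matrix.smul_mul,
      Matrix.mul_smul, Matrix.trace_sum, Matrix.trace_smul, smul_smul, smul_eq_mul]
    simp only [Finset.mul_sum]
    rw [Finset.sum_comm]
    refine Finset.sum_congr rfl fun i _ => Finset.sum_congr rfl fun j _ => ?_
    ring
  rw [hexp]
  -- split the double sum
  have hsplit : ∀ i : Fin s, ∑ j, (Ni i : ℚ) * (Ni j : ℚ) * Matrix.trace ((A i)ᵀ * Qi * A j * Mq) =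
      (Ni i : ℚ) ^ 2 * Matrix.trace ((A i)ᵀ * Qi * A i * Mq) +
      ∑ j ∈ Finset.univ.erase i, ((c i j : ℤ) : ℚ) := by
    intro i
    rw [← Finset.add_sum_erase _ _ (Finset.mem_univ i),
      Finset.sum_congr rfl fun j hj => hkey i j ((Finset.mem_erase.mp hj).1).symm]
    ring
  obtain ⟨z, hz⟩ := aux_even_sym_sum c hcsym
  refine ⟨z, ?_⟩
  simp only [hsplit, Finset.sum_add_distrib]
  congr 1
  calc ∑ i, ∑ j ∈ Finset.univ.erase i, ((c i j : ℤ) : ℚ)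
      = ((∑ i, ∑ j ∈ Finset.univ.erase i, c i j : ℤ) : ℚ) := by push_cast; rfl
    _ = 2 * (z : ℚ) := by rw [hz]; push_cast; ring
end

section
/- Let M, M'' be n×n integral symmetric matrices, N a positive integer, and suppose there exist G ∈ GL_n(ℤ) and β ∈ Γ₀(N) with G·(M'' I)·β ≡ (M I) (mod N) (as n×2n matrices). Then γ_{M''} = ((I,0),(M'',I)) ∈ Γ_∞ · γ_M · Γ₀(N), where γ_M = ((I,0),(M,I)) and Γ_∞ is the subgroup of Sp_n(ℤ) with lower-left block zero. -/
/-!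
Put `X = diag(G⁻ᵀ, G) · γ_{M''} · β = (x y; z w)`, a symplectic matrix with `(z w) ≡ (M 1)`.
The symplectic relations `yᵀw = wᵀy` and `wᵀx - yᵀz = 1` make `S = yᵀw` an integral symmetric
matrix with `x - S z ≡ x - yᵀM ≡ 1`, so `γ_M⁻¹ (1 -S; 0 1) X` has lower-left block
`z - M (x - S z) ≡ 0` and lies in `Γ₀(N)`. Hence `X ∈ Γ_∞ γ_M Γ₀(N)`, and so is `γ_{M''}`, which
differs from `X` by `diag(G⁻ᵀ, G) ∈ Γ_∞` on the left and `β ∈ Γ₀(N)` on the right.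
-/

open Matrix

theorem Matrix.toRows₂_mul {m₁ m₂ k o R : Type*} [Fintype k] [Mul R] [AddCommMonoid R]
    (A : Matrix (m₁ ⊕ m₂) k R) (B : Matrix k o R) : (A * B).toRows₂ = A.toRows₂ * B :=
  rfl

namespace SymplecticGroup

open DoubleCoset

variable {n R : Type*} [Fintype n] [DecidableEq n] [CommRing R]

theorem coe_inv_apply_inr_inl (A : symplecticGroup n R) (i j : n) :
    (↑A⁻¹ : Matrix (n ⊕ n) (n ⊕ n) R) (Sum.inr i) (Sum.inl j) =
      -(A : Matrix (n ⊕ n) (n ⊕ n) R) (Sum.inr j) (Sum.inl i) := by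
  simp [coe_inv, J, Matrix.mul_apply, fromBlocks, Fintype.sum_sum_type, one_apply]

variable (n) in
/-- For `I = ⊥` this is `Γ_∞`. -/
def Gamma0 (I : Ideal R) : Subgroup (symplecticGroup n R) where
  carrier := {A | ∀ i j, (A : Matrix (n ⊕ n) (n ⊕ n) R) (Sum.inr i) (Sum.inl j) ∈ I}
  one_mem' i j := by simp
  mul_mem' {A B} hA hB i j := by
    simp only [Submonoid.coe_mul, Matrix.mul_apply, Fintype.sum_sum_type]
    exact I.add_mem (I.sum_mem fun k _ ↦ I.mul_mem_right _ (hA i k))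
      (I.sum_mem fun k _ ↦ I.mul_mem_left _ (hB k j))
  inv_mem' {A} hA i j := by
    rw [coe_inv_apply_inr_inl]
    exact I.neg_mem_iff.2 (hA j i)

def lowerUnipotent (M : Matrix n n R) (hM : M.IsSymm) : symplecticGroup n R :=
  ⟨fromBlocks 1 0 M 1, fromBlocks_mem_iff.2 ⟨by simpa using hM.eq.symm, by simp, by simp⟩⟩

def upperUnipotent (S : Matrix n n R) (hS : S.IsSymm) : symplecticGroup n R :=
  ⟨fromBlocks 1 S 0 1, fromBlocks_mem_iff.2 ⟨by simp, by simpa using hS.eq, by simp⟩⟩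

theorem lowerUnipotent_inv (M : Matrix n n R) (hM : M.IsSymm) :
    (lowerUnipotent M hM)⁻¹ = lowerUnipotent (-M) hM.neg :=
  inv_eq_of_mul_eq_one_right <| Subtype.ext <| by
    simp [lowerUnipotent, fromBlocks_multiply, ← fromBlocks_one]

theorem upperUnipotent_inv (S : Matrix n n R) (hS : S.IsSymm) :
    (upperUnipotent S hS)⁻¹ = upperUnipotent (-S) hS.neg :=
  inv_eq_of_mul_eq_one_right <| Subtype.ext <| by
    simp [upperUnipotent, fromBlocks_multiply, ← fromBlocks_one]

theorem upperUnipotent_mem_Gamma0_bot (S : Matrix n n R) (hS : S.IsSymm) :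
    upperUnipotent S hS ∈ Gamma0 n ⊥ :=
  fun i j ↦ by simp [upperUnipotent]

theorem mem_doubleCoset_of_toRows₂_map_eq {I : Ideal R} {M : Matrix n n R} (hM : M.IsSymm)
    (X : symplecticGroup n R)
    (hX : (X : Matrix (n ⊕ n) (n ⊕ n) R).toRows₂.map (Ideal.Quotient.mk I) =
      (fromCols M 1).map (Ideal.Quotient.mk I)) :
    X ∈ doubleCoset (lowerUnipotent M hM) (Gamma0 n (⊥ : Ideal R)) (Gamma0 n I) := by
  set π := Ideal.Quotient.mk I
  set x := (X : Matrix (n ⊕ n) (n ⊕ n) R).toBlocks₁₁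
  set y := (X : Matrix (n ⊕ n) (n ⊕ n) R).toBlocks₁₂
  set z := (X : Matrix (n ⊕ n) (n ⊕ n) R).toBlocks₂₁
  set w := (X : Matrix (n ⊕ n) (n ⊕ n) R).toBlocks₂₂
  have hXb : (X : Matrix (n ⊕ n) (n ⊕ n) R) = fromBlocks x y z w := (fromBlocks_toBlocks _).symm
  obtain ⟨-, hyw, hxw⟩ := fromBlocks_mem_iff.1 (hXb ▸ X.2)
  have hS : (yᵀ * w).IsSymm := by
    rw [IsSymm, transpose_mul, transpose_transpose, hyw]
  set τ := upperUnipotent (yᵀ * w) hS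
  refine mem_doubleCoset.2
    ⟨τ, upperUnipotent_mem_Gamma0_bot _ _, (τ * lowerUnipotent M hM)⁻¹ * X, ?_, by group⟩
  have hδ : (((τ * lowerUnipotent M hM)⁻¹ * X : symplecticGroup n R) :
      Matrix (n ⊕ n) (n ⊕ n) R).toBlocks₂₁ = z - M * (x - yᵀ * w * z) := by
    rw [_root_.mul_inv_rev, lowerUnipotent_inv, upperUnipotent_inv]
    simp only [lowerUnipotent, upperUnipotent, Submonoid.coe_mul, hXb, fromBlocks_multiply,
      toBlocks_fromBlocks₂₁]
    noncomm_ring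
  have hz : z.map π = M.map π := by
    ext i j; exact congrFun (congrFun hX i) (Sum.inl j)
  have hw : w.map π = 1 := by
    ext i j
    exact (congrFun (congrFun hX i) (Sum.inr j)).trans (by simp [one_apply, apply_ite π])
  have hwx : wᵀ * x - yᵀ * z = 1 := by
    simpa [transpose_sub, transpose_mul] using congrArg transpose hxw
  have hx : x.map π - (y.map π)ᵀ * M.map π = 1 := by
    have := congrArg π.mapMatrix hwx
    simp only [map_sub, map_mul, map_one, RingHom.mapMatrix_apply, transpose_map, hz, hw] at this
    simpa using this
  have hL : (z - M * (x - yᵀ * w * z)).map π = 0 :=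
    calc (z - M * (x - yᵀ * w * z)).map π
        = M.map π - M.map π * (x.map π - (y.map π)ᵀ * M.map π) := by
          simp only [← RingHom.mapMatrix_apply, map_sub, map_mul]
          simp only [RingHom.mapMatrix_apply, transpose_map, hz, hw, Matrix.mul_one]
      _ = 0 := by rw [hx, Matrix.mul_one, sub_self]
  rw [← hδ] at hL
  exact fun i j ↦ Ideal.Quotient.eq_zero_iff_mem.1 (congrFun (congrFun hL i) j)

theorem lowerUnipotent_mem_doubleCoset_of_map_eq {I : Ideal R} {M M'' : Matrix n n R}
    (hM : M.IsSymm) (hM'' : M''.IsSymm) {G : Matrix n n R} (hG : IsUnit G.det)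
    {β : symplecticGroup n R} (hβ : β ∈ Gamma0 n I)
    (hcong : (G * fromCols M'' 1 * (β : Matrix (n ⊕ n) (n ⊕ n) R)).map (Ideal.Quotient.mk I) =
      (fromCols M 1).map (Ideal.Quotient.mk I)) :
    lowerUnipotent M'' hM'' ∈
      doubleCoset (lowerUnipotent M hM) (Gamma0 n (⊥ : Ideal R)) (Gamma0 n I) := by
  set P : symplecticGroup n R := ⟨fromBlocks (G⁻¹)ᵀ 0 0 G,
    fromBlocks_mem_iff.2 ⟨by simp, by simp, by simp [nonsing_inv_mul G hG]⟩⟩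
  have hP : P ∈ Gamma0 n (⊥ : Ideal R) := fun i j ↦ by simp [P]
  have hrows : (↑(P * lowerUnipotent M'' hM'' * β) : Matrix (n ⊕ n) (n ⊕ n) R).toRows₂ =
      G * fromCols M'' 1 * (β : Matrix (n ⊕ n) (n ⊕ n) R) := by
    have hPγ : ((P : Matrix (n ⊕ n) (n ⊕ n) R) * lowerUnipotent M'' hM'').toRows₂ =
        G * fromCols M'' 1 := by
      ext i (j | j) <;> simp [P, lowerUnipotent, fromBlocks_multiply, mul_fromCols]
    rw [Submonoid.coe_mul, Submonoid.coe_mul, toRows₂_mul, hPγ]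
    rfl
  obtain ⟨τ, hτ, δ, hδ, h⟩ :=
    mem_doubleCoset.1 (mem_doubleCoset_of_toRows₂_map_eq hM _ (hrows ▸ hcong))
  refine mem_doubleCoset.2 ⟨P⁻¹ * τ, mul_mem (inv_mem hP) hτ, δ * β⁻¹, mul_mem hδ (inv_mem hβ), ?_⟩
  calc lowerUnipotent M'' hM'' = P⁻¹ * (P * lowerUnipotent M'' hM'' * β) * β⁻¹ := by group
    _ = P⁻¹ * τ * lowerUnipotent M hM * (δ * β⁻¹) := by rw [h]; group

end SymplecticGroup

theorem double_coset_criterion_general (n N : ℕ)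
    (M M'' : Matrix (Fin n) (Fin n) ℤ) (hM : M.IsSymm) (hM'' : M''.IsSymm)
    (G : Matrix (Fin n) (Fin n) ℤ) (hG : IsUnit G.det)
    (β : Matrix (Fin n ⊕ Fin n) (Fin n ⊕ Fin n) ℤ)
    (hβ : β ∈ Matrix.symplecticGroup (Fin n) ℤ)
    (hβ0 : ∀ i j, (N : ℤ) ∣ β (Sum.inr i) (Sum.inl j))
    (hcong : ∀ i j, (N : ℤ) ∣
      ((G * Matrix.fromCols M'' (1 : Matrix (Fin n) (Fin n) ℤ) * β) i j - Matrix.fromCols M (1 : Matrix (Fin n) (Fin n) ℤ) i j)) :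
    ∃ α δ : Matrix (Fin n ⊕ Fin n) (Fin n ⊕ Fin n) ℤ,
      α ∈ Matrix.symplecticGroup (Fin n) ℤ ∧
      (∀ i j, α (Sum.inr i) (Sum.inl j) = 0) ∧
      δ ∈ Matrix.symplecticGroup (Fin n) ℤ ∧
      (∀ i j, (N : ℤ) ∣ δ (Sum.inr i) (Sum.inl j)) ∧
      Matrix.fromBlocks 1 0 M'' 1 = α * Matrix.fromBlocks 1 0 M 1 * δ := by
  obtain ⟨α, hα, δ, hδ, h⟩ := DoubleCoset.mem_doubleCoset.1 <|
    SymplecticGroup.lowerUnipotent_mem_doubleCoset_of_map_eq (I := Ideal.span {(N : ℤ)}) hM hM'' hG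
      (β := ⟨β, hβ⟩) (fun i j ↦ Ideal.mem_span_singleton.2 (hβ0 i j))
      (by ext i j; exact Ideal.Quotient.eq.2 (Ideal.mem_span_singleton.2 (hcong i j)))
  exact ⟨α, δ, α.2, fun i j ↦ Ideal.mem_bot.1 (hα i j), δ.2,
    fun i j ↦ Ideal.mem_span_singleton.1 (hδ i j), congrArg Subtype.val h⟩

/-- If `G·(M'' I)·β ≡ (M I) (mod N)` for some `G ∈ GL_n(ℤ)` and `β ∈ Γ₀(N)`, then
`γ_{M''} ∈ Γ_∞ · γ_M · Γ₀(N)`. -/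
theorem double_coset_criterion (n N : ℕ) (hN : 0 < N)
    (M M'' : Matrix (Fin n) (Fin n) ℤ) (hM : M.IsSymm) (hM'' : M''.IsSymm)
    (G : Matrix (Fin n) (Fin n) ℤ) (hG : IsUnit G.det)
    (β : Matrix (Fin n ⊕ Fin n) (Fin n ⊕ Fin n) ℤ)
    (hβ : β ∈ Matrix.symplecticGroup (Fin n) ℤ)
    (hβ0 : ∀ i j, (N : ℤ) ∣ β (Sum.inr i) (Sum.inl j))
    (hcong : ∀ i j, (N : ℤ) ∣
      ((G * Matrix.fromCols M'' (1 : Matrix (Fin n) (Fin n) ℤ) * β) i j - Matrix.fromCols M (1 : Matrix (Fin n) (Fin n) ℤ) i j)) :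
    ∃ α δ : Matrix (Fin n ⊕ Fin n) (Fin n ⊕ Fin n) ℤ,
      α ∈ Matrix.symplecticGroup (Fin n) ℤ ∧
      (∀ i j, α (Sum.inr i) (Sum.inl j) = 0) ∧
      δ ∈ Matrix.symplecticGroup (Fin n) ℤ ∧
      (∀ i j, (N : ℤ) ∣ δ (Sum.inr i) (Sum.inl j)) ∧
      Matrix.fromBlocks 1 0 M'' 1 = α * Matrix.fromBlocks 1 0 M 1 * δ :=
  double_coset_criterion_general n N M M'' hM hM'' G hG β hβ hβ0 hcong
end
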